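/- arXiv:1903.12636 — 2 statements merged into one kernel-verified Lean document; each statement's English description precedes it below -/
import Mathlib

section
/- Let n ≥ 2 and r, T > 0. Then 𝒥₊(℧) ∩ 𝒥₋(℧) = {(t,x') ∈ ℝ^{1+n} : 0 < t < T, |x'| < r + t, and |x'| < r + T − t}. -/
/- Statement 1: the causal diamond 𝒥₊(℧) ∩ 𝒥₋(℧) of ℧ = (0,T) × B(0,r) in
Minkowski space is {(t,x') : 0 < t < T, |x'| < r + t, |x'| < r + T − t}. -/

noncomputable section

open Set

/-- Spacetime `ℝ^{1+n}`, coordinate `0` being time. -/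
abbrev X (n : ℕ) := EuclideanSpace ℝ (Fin (n + 1))

/-- The spatial part `x' ∈ ℝⁿ` of a spacetime point. -/
def sp {n : ℕ} (x : X n) : EuclideanSpace ℝ (Fin n) := WithLp.toLp 2 (fun j : Fin n => x j.succ)

/-- The observation set `℧ = (0,T) × B(0,r)`. -/
def mho (n : ℕ) (r T : ℝ) : Set (X n) :=
  {x | 0 < x 0 ∧ x 0 < T ∧ ‖sp x‖ < r}

/-- The causal future `𝒥₊(q)` of a point. -/
def Jplus {n : ℕ} (q : X n) : Set (X n) :=
  {x | q 0 ≤ x 0 ∧ ‖sp x - sp q‖ ≤ x 0 - q 0}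

/-- The causal past `𝒥₋(q)` of a point. -/
def Jminus {n : ℕ} (q : X n) : Set (X n) :=
  {x | x 0 ≤ q 0 ∧ ‖sp x - sp q‖ ≤ q 0 - x 0}

/-- Auxiliary constructor of a spacetime point from time and space parts. -/
def mk' {n : ℕ} (t : ℝ) (y : EuclideanSpace ℝ (Fin n)) : X n :=
  WithLp.toLp 2 (fun i : Fin (n + 1) => Fin.cases (motive := fun _ => ℝ) t (fun j => y j) i)

lemma mk'_zero {n : ℕ} (t : ℝ) (y : EuclideanSpace ℝ (Fin n)) : mk' t y 0 = t := by
  simp [mk']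

lemma sp_mk' {n : ℕ} (t : ℝ) (y : EuclideanSpace ℝ (Fin n)) : sp (mk' t y) = y := by
  ext j; simp [sp, mk']

lemma key_sub {n : ℕ} (x : X n) (c : ℝ) :
    sp x - c • sp x = (1 - c) • sp x := by
  rw [sub_smul, one_smul]

theorem statement1 (n : ℕ) (hn : 2 ≤ n) (r T : ℝ) (hr : 0 < r) (hT : 0 < T) :
    (⋃ q ∈ mho n r T, Jplus q) ∩ (⋃ q ∈ mho n r T, Jminus q) =
      {x : X n | 0 < x 0 ∧ x 0 < T ∧ ‖sp x‖ < r + x 0 ∧ ‖sp x‖ < r + T - x 0} := by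
  ext x
  simp only [mem_inter_iff, mem_iUnion, mem_setOf_eq]
  constructor
  · rintro ⟨⟨q, ⟨hq0, hqT, hqr⟩, hqx0, hqxs⟩, ⟨p, ⟨hp0, hpT, hpr⟩, hpx0, hpxs⟩⟩
    have h1 : ‖sp x‖ - ‖sp q‖ ≤ ‖sp x - sp q‖ := norm_sub_norm_le _ _
    have h2 : ‖sp x‖ - ‖sp p‖ ≤ ‖sp x - sp p‖ := norm_sub_norm_le _ _
    refine ⟨by linarith, by linarith, by linarith, by linarith⟩
  · rintro ⟨hx0, hxT, hxs1, hxs2⟩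
    set s := ‖sp x‖ with hs
    have hs0 : 0 ≤ s := norm_nonneg _
    constructor
    · by_cases hcase : s < r
      · exact ⟨x, ⟨hx0, hxT, hcase⟩, le_refl _, by simp⟩
      · push_neg at hcase
        have hspos : 0 < s := lt_of_lt_of_le hr hcase
        set d := (max (s - r) 0 + min (x 0) s) / 2 with hd
        have hlt : max (s - r) 0 < min (x 0) s := by
          rcases max_cases (s - r) 0 with ⟨h, _⟩ | ⟨h, _⟩ <;>
          rcases min_cases (x 0) s with ⟨h', _⟩ | ⟨h', _⟩ <;> rw [h, h'] <;> linarith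
        have hd1 : max (s - r) 0 < d := by rw [hd]; linarith
        have hd2 : d < min (x 0) s := by rw [hd]; linarith
        have hdsr : s - r < d := lt_of_le_of_lt (le_max_left _ _) hd1
        have hdpos : 0 < d := lt_of_le_of_lt (le_max_right _ _) hd1
        have hdx0 : d < x 0 := lt_of_lt_of_le hd2 (min_le_left _ _)
        have hds : d < s := lt_of_lt_of_le hd2 (min_le_right _ _)
        refine ⟨mk' (x 0 - d) ((1 - d / s) • sp x), ⟨?_, ?_, ?_⟩, ?_, ?_⟩
        · rw [mk'_zero]; linarith
        · rw [mk'_zero]; linarith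
        · rw [sp_mk', norm_smul, Real.norm_eq_abs]
          rw [abs_of_nonneg (by rw [sub_nonneg]; exact (div_le_one hspos).mpr hds.le)]
          rw [sub_mul, one_mul, div_mul_cancel₀ _ (ne_of_gt hspos)]
          linarith
        · rw [mk'_zero]; linarith
        · rw [mk'_zero, sp_mk', key_sub]
          have : (1 : ℝ) - (1 - d / s) = d / s := by ring
          rw [this, norm_smul, Real.norm_eq_abs,
            abs_of_nonneg (by positivity : (0:ℝ) ≤ d / s),
            div_mul_cancel₀ _ (ne_of_gt hspos)]
          linarith
    · by_cases hcase : s < r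
      · exact ⟨x, ⟨hx0, hxT, hcase⟩, le_refl _, by simp⟩
      · push_neg at hcase
        have hspos : 0 < s := lt_of_lt_of_le hr hcase
        set d := (max (s - r) 0 + min (T - x 0) s) / 2 with hd
        have hlt : max (s - r) 0 < min (T - x 0) s := by
          rcases max_cases (s - r) 0 with ⟨h, _⟩ | ⟨h, _⟩ <;>
          rcases min_cases (T - x 0) s with ⟨h', _⟩ | ⟨h', _⟩ <;> rw [h, h'] <;> linarith
        have hd1 : max (s - r) 0 < d := by rw [hd]; linarith
        have hd2 : d < min (T - x 0) s := by rw [hd]; linarith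
        have hdsr : s - r < d := lt_of_le_of_lt (le_max_left _ _) hd1
        have hdpos : 0 < d := lt_of_le_of_lt (le_max_right _ _) hd1
        have hdx0 : d < T - x 0 := lt_of_lt_of_le hd2 (min_le_left _ _)
        have hds : d < s := lt_of_lt_of_le hd2 (min_le_right _ _)
        refine ⟨mk' (x 0 + d) ((1 - d / s) • sp x), ⟨?_, ?_, ?_⟩, ?_, ?_⟩
        · rw [mk'_zero]; linarith
        · rw [mk'_zero]; linarith
        · rw [sp_mk', norm_smul, Real.norm_eq_abs]
          rw [abs_of_nonneg (by rw [sub_nonneg]; exact (div_le_one hspos).mpr hds.le)]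
          rw [sub_mul, one_mul, div_mul_cancel₀ _ (ne_of_gt hspos)]
          linarith
        · rw [mk'_zero]; linarith
        · rw [mk'_zero, sp_mk', key_sub]
          have : (1 : ℝ) - (1 - d / s) = d / s := by ring
          rw [this, norm_smul, Real.norm_eq_abs,
            abs_of_nonneg (by positivity : (0:ℝ) ≤ d / s),
            div_mul_cancel₀ _ (ne_of_gt hspos)]
          linarith
end
end

section
/- Let n ≥ 2, r, T > 0, and let p = (t₁,x₁') ∈ ℝ^{1+n} satisfy 0 < t₁ < T, r ≤ |x₁'| < r + t₁, and |x₁'| < r + T − t₁ (i.e. p lies in the interior of the causal diamond but outside ℧). Then there exist x₀' ∈ ℝⁿ with |x₀'| < r and s₀ > 0 such that: |x₁' − x₀'| = s₀; t₀ := t₁ − s₀ ∈ (0,T); t₀ + 2s₀ = t₁ + s₀ ∈ (0,T); and, setting ξ⁻ = (−1, (x₁'−x₀')/s₀) and ξ⁺ = (−1, −(x₁'−x₀')/s₀), both ξ⁻ and ξ⁺ are light-like covectors, p = γ_{q⁻,ξ⁻}(s₀) with q⁻ = (t₀,x₀') ∈ ℧, and p = γ_{q⁺,ξ⁺}(−s₀)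 with q⁺ = (t₀+2s₀, x₀') ∈ ℧. -/
/- Statement 2: for a point p in the interior of the causal diamond but outside ℧,
there are points q⁻, q⁺ ∈ ℧ and light-like covectors ξ⁻, ξ⁺ whose null lines join
q⁻ to p and p to q⁺. Spacetime points are written as pairs (t, x') ∈ ℝ × ℝⁿ. -/

noncomputable section

/-- Space `ℝⁿ`. -/
abbrev E (n : ℕ) := EuclideanSpace ℝ (Fin n)

/-- A covector `ξ = (ξ₀, ξ')` is light-like if `|ξ₀|² = |ξ'|²`. -/
def lightLikeP {n : ℕ} (ξ : ℝ × E n) : Prop := ξ.1 ^ 2 = ‖ξ.2‖ ^ 2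

/-- The vector version `ξ^♯ = (−ξ₀, ξ')` of a covector. -/
def sharpP {n : ℕ} (ξ : ℝ × E n) : ℝ × E n := (-ξ.1, ξ.2)

/-- The line `γ_{q,ξ}(s) = s ξ^♯ + q`. -/
def lineGeo {n : ℕ} (q ξ : ℝ × E n) (s : ℝ) : ℝ × E n := s • sharpP ξ + q

/-- The observation set `℧ = (0,T) × B(0,r)`. -/
def mhoP (n : ℕ) (r T : ℝ) : Set (ℝ × E n) := {p | 0 < p.1 ∧ p.1 < T ∧ ‖p.2‖ < r}

theorem statement2 (n : ℕ) (hn : 2 ≤ n) (r T : ℝ) (hr : 0 < r) (hT : 0 < T)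
    (t₁ : ℝ) (x₁ : E n) (ht₁0 : 0 < t₁) (ht₁T : t₁ < T)
    (h1 : r ≤ ‖x₁‖) (h2 : ‖x₁‖ < r + t₁) (h3 : ‖x₁‖ < r + T - t₁) :
    ∃ (x₀ : E n) (s₀ : ℝ), ‖x₀‖ < r ∧ 0 < s₀ ∧ ‖x₁ - x₀‖ = s₀ ∧
      (0 < t₁ - s₀ ∧ t₁ - s₀ < T) ∧
      (0 < t₁ + s₀ ∧ t₁ + s₀ < T) ∧
      lightLikeP ((-1 : ℝ), s₀⁻¹ • (x₁ - x₀)) ∧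
      lightLikeP ((-1 : ℝ), -(s₀⁻¹ • (x₁ - x₀))) ∧
      (t₁, x₁) = lineGeo (t₁ - s₀, x₀) ((-1 : ℝ), s₀⁻¹ • (x₁ - x₀)) s₀ ∧
      (t₁, x₁) = lineGeo (t₁ + s₀, x₀) ((-1 : ℝ), -(s₀⁻¹ • (x₁ - x₀))) (-s₀) ∧
      (t₁ - s₀, x₀) ∈ mhoP n r T ∧ (t₁ + s₀, x₀) ∈ mhoP n r T := by
  have hN : 0 < ‖x₁‖ := lt_of_lt_of_le hr h1
  set N := ‖x₁‖ with hNdef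
  set a : ℝ := max (N - r) 0 with ha
  set b : ℝ := min (min t₁ (T - t₁)) N with hb
  have hab : a < b := by
    apply max_lt <;> apply lt_min <;> [skip; skip; skip; skip] <;>
      first
        | exact lt_min (by linarith) (by linarith)
        | linarith
  set s₀ : ℝ := (a + b) / 2 with hs₀
  have has : a < s₀ := by simp only [hs₀]; linarith
  have hsb : s₀ < b := by simp only [hs₀]; linarith
  have hs0 : 0 < s₀ := lt_of_le_of_lt (le_max_right _ _) has
  have hst₁ : s₀ < t₁ := lt_of_lt_of_le hsb (le_trans (min_le_left _ _) (min_le_left _ _))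
  have hsT : s₀ < T - t₁ := lt_of_lt_of_le hsb (le_trans (min_le_left _ _) (min_le_right _ _))
  have hsN : s₀ < N := lt_of_lt_of_le hsb (min_le_right _ _)
  have hsr : N - r < s₀ := lt_of_le_of_lt (le_max_left _ _) has
  set x₀ : E n := (1 - s₀ / N) • x₁ with hx₀
  have hdiff : x₁ - x₀ = (s₀ / N) • x₁ := by
    rw [hx₀, sub_smul, one_smul, sub_sub_cancel]
  have hnx₀ : ‖x₀‖ = N - s₀ := by
    rw [hx₀, norm_smul, Real.norm_eq_abs, abs_of_nonneg, sub_mul, one_mul,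
      div_mul_cancel₀ _ hN.ne']
    rw [sub_nonneg, div_le_one hN]
    exact hsN.le
  have hnd : ‖x₁ - x₀‖ = s₀ := by
    rw [hdiff, norm_smul, Real.norm_eq_abs, abs_of_nonneg (by positivity),
      div_mul_cancel₀ _ hN.ne']
  have hv : ‖s₀⁻¹ • (x₁ - x₀)‖ = 1 := by
    rw [norm_smul, Real.norm_eq_abs, abs_of_nonneg (by positivity), hnd,
      inv_mul_cancel₀ hs0.ne']
  have hsv : s₀ • (s₀⁻¹ • (x₁ - x₀)) = x₁ - x₀ := by
    rw [smul_smul, mul_inv_cancel₀ hs0.ne', one_smul]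
  refine ⟨x₀, s₀, by rw [hnx₀]; linarith, hs0, hnd, ⟨by linarith, by linarith⟩,
    ⟨by linarith, by linarith⟩, ?_, ?_, ?_, ?_, ⟨by dsimp; linarith, by dsimp; linarith,
      by simpa [hnx₀] using (by linarith : N - s₀ < r)⟩,
    ⟨by dsimp; linarith, by dsimp; linarith,
      by simpa [hnx₀] using (by linarith : N - s₀ < r)⟩⟩
  · simp [lightLikeP, hv]
  · simp [lightLikeP, hv]
  · simp only [lineGeo, sharpP, Prod.smul_mk, Prod.mk_add_mk, smul_eq_mul, Prod.mk.injEq]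
    constructor
    · ring
    · rw [hsv]; abel
  · simp only [lineGeo, sharpP, Prod.smul_mk, Prod.mk_add_mk, smul_eq_mul, Prod.mk.injEq]
    constructor
    · ring
    · rw [smul_neg, neg_smul, neg_neg, hsv]; abel
end
end
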